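/- arXiv:1706.00075 — 4 statements merged into one kernel-verified Lean document; each statement's English description precedes it below -/
import Mathlib

section
/- Let H₁ and H₂ be subgroups of GL₂(ℤ/p²ℤ) contained in ker φ. Then H₁ and H₂ are locally conjugate in GL₂(ℤ/p²ℤ) if and only if both of the following hold: (i) H₁ and H₂ contain exactly the same scalar matrices, and (ii) for every pair t, d ∈ ℤ/pℤ, the number of elements κ ∈ H₁ that can be written as κ = 1 + p·A with A a 2×2 matrix over ℤ/p²ℤ whose reduction modulo p has trace t and determinant d is equal to the corresponding number of such elements of H₂. -/
open Matrix

/-- `GL₂(ℤ/nℤ)`. -/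
abbrev GL2 (n : ℕ) : Type := GL (Fin 2) (ZMod n)

/-- Reduction modulo `p` from `ℤ/p²ℤ` to `ℤ/pℤ`. -/
def red (p : ℕ) : ZMod (p^2) →+* ZMod p :=
  ZMod.castHom (dvd_pow_self p (by norm_num)) (ZMod p)

/-- The natural homomorphism `φ : GL₂(ℤ/p²ℤ) →* GL₂(ℤ/pℤ)` given by entrywise
reduction modulo `p`. -/
def phi (p : ℕ) : GL2 (p^2) →* GL2 p :=
  Matrix.GeneralLinearGroup.map (red p)

/-- The element `1 + p • A` of `GL₂(ℤ/p²ℤ)` (its inverse is `1 - p • A`). -/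
def kerUnit {p : ℕ} (A : Matrix (Fin 2) (Fin 2) (ZMod (p^2))) : GL2 (p^2) where
  val := 1 + (p : ZMod (p^2)) • A
  inv := 1 - (p : ZMod (p^2)) • A
  val_inv := by
    have h : ((p : ZMod (p^2)) • A) * ((p : ZMod (p^2)) • A) = 0 := by
      rw [smul_mul_assoc, mul_smul_comm, smul_smul, ← Nat.cast_mul, ← pow_two,
        ZMod.natCast_self, zero_smul]
    rw [add_mul, one_mul, mul_sub, mul_one, h, sub_zero]
    abel
  inv_val := by
    have h : ((p : ZMod (p^2)) • A) * ((p : ZMod (p^2)) • A) = 0 := by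
      rw [smul_mul_assoc, mul_smul_comm, smul_smul, ← Nat.cast_mul, ← pow_two,
        ZMod.natCast_self, zero_smul]
    rw [sub_mul, one_mul, mul_add, mul_one, h, add_zero]
    abel

/-- The antidiagonal swap matrix `!![0,1;1,0]` as an element of `GL₂(ℤ/p²ℤ)`. -/
def swapGL (p : ℕ) : GL2 (p^2) where
  val := !![0, 1; 1, 0]
  inv := !![0, 1; 1, 0]
  val_inv := by
    ext i j
    fin_cases i <;> fin_cases j <;>
      simp [Matrix.mul_apply, Fin.sum_univ_succ, Matrix.one_apply]
  inv_val := by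
    ext i j
    fin_cases i <;> fin_cases j <;>
      simp [Matrix.mul_apply, Fin.sum_univ_succ, Matrix.one_apply]

/-- Subgroups `H₁` and `H₂` of a group `G` are locally conjugate in `G` if there is a
bijection `f : H₁ → H₂` such that `h` and `f h` are conjugate in `G` for every `h ∈ H₁`. -/
def IsLocallyConjugate {G : Type*} [Group G] (H₁ H₂ : Subgroup G) : Prop :=
  ∃ f : H₁ ≃ H₂, ∀ h : H₁, IsConj (h : G) ((f h : G))

/-- Subgroups `H₁` and `H₂` of `G` are conjugate in `G`: `g H₁ g⁻¹ = H₂` for some `g`. -/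
def IsConjugateSubgroup {G : Type*} [Group G] (H₁ H₂ : Subgroup G) : Prop :=
  ∃ g : G, Subgroup.map (MulAut.conj g).toMonoidHom H₁ = H₂

/-- Nontrivially locally conjugate: locally conjugate but not conjugate. -/
def IsNontriviallyLocallyConjugate {G : Type*} [Group G] (H₁ H₂ : Subgroup G) : Prop :=
  IsLocallyConjugate H₁ H₂ ∧ ¬ IsConjugateSubgroup H₁ H₂

/-!
An element of `ker φ` has the form `1 + p • A`, and `p • A` only depends on `A` modulo `p`.
Since `u * (1 + p • A) = (1 + p • B) * u` amounts to `ū * Ā = B̄ * ū` modulo `p` and `φ` is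
surjective, `1 + p • A` and `1 + p • B` are conjugate in `GL₂(ℤ/p²ℤ)` iff `Ā` and `B̄` are
conjugate in `M₂(ℤ/pℤ)`. A non-scalar `2 × 2` matrix over a field is conjugate to the companion
matrix of its characteristic polynomial, so the conjugacy class of a non-scalar element of `ker φ`
is determined by the trace and determinant of `Ā`, while a scalar element is central.
For finite groups, local conjugacy means that both subgroups meet every conjugacy class in the
same number of elements. For the central classes this is (i); given (i), the counts in (ii)
exceed the counts of the non-central classes by the same number of scalar elements.
-/

section LocallyConjugate

variable {G κ : Type*} [Group G] [Finite G]

theorem isLocallyConjugate_iff_card_fiber_eq {H₁ H₂ : Subgroup G} (c : G → κ)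
    (hc : ∀ x ∈ H₁, ∀ y ∈ H₂, IsConj x y ↔ c x = c y) :
    IsLocallyConjugate H₁ H₂ ↔
      ∀ k, Nat.card {g // g ∈ H₁ ∧ c g = k} = Nat.card {g // g ∈ H₂ ∧ c g = k} := by
  have fiber (H : Subgroup G) (k : κ) : {x : H // c x = k} ≃ {g // g ∈ H ∧ c g = k} :=
    Equiv.subtypeSubtypeEquivSubtypeInter (· ∈ H) (c · = k)
  simp_rw [← Nat.card_congr (fiber _ _)]
  constructor
  · rintro ⟨f, hf⟩ k
    exact Nat.card_congr (f.subtypeEquiv fun x => by rw [(hc x x.2 (f x) (f x).2).1 (hf x)])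
  · intro hcard
    let e (k : κ) : {x : H₁ // c x = k} ≃ {y : H₂ // c y = k} := (Finite.card_eq.1 (hcard k)).some
    exact ⟨Equiv.ofFiberEquiv e, fun x =>
      (hc x x.2 _ (Equiv.ofFiberEquiv e x).2).2 (Equiv.ofFiberEquiv_map e x).symm⟩

end LocallyConjugate

namespace Matrix

variable {n R K : Type*} [Fintype n] [DecidableEq n] [CommRing R] [Field K]

theorem GeneralLinearGroup.mem_center_iff_exists_val_eq_smul_one {g : GL n R} :
    g ∈ Subgroup.center (GL n R) ↔ ∃ w : R, (g : Matrix n n R) = w • 1 := by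
  simp [mem_center_iff_val_mem_range_scalar, eq_comm, smul_one_eq_diagonal]

theorem trace_eq_and_det_eq_of_isConj {M N : Matrix n n R} (h : IsConj M N) :
    M.trace = N.trace ∧ M.det = N.det := by
  obtain ⟨c, hc⟩ := h
  have hN : N = c * M * c⁻¹ := (Units.eq_mul_inv_iff_mul_eq c).2 hc.eq.symm
  exact ⟨(hN ▸ trace_units_conj c M).symm, (hN ▸ det_units_conj c M).symm⟩

theorem exists_det_ne_zero_of_notMem_range_scalar {M : Matrix (Fin 2) (Fin 2) K}
    (hM : M ∉ Set.range (scalar (Fin 2))) :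
    ∃ a b : K, !![a, M 0 0 * a + M 0 1 * b; b, M 1 0 * a + M 1 1 * b].det ≠ 0 := by
  simp only [det_fin_two_of]
  by_cases h₁₀ : M 1 0 = 0
  · by_cases h₀₁ : M 0 1 = 0
    · refine ⟨1, 1, fun h => hM ⟨M 0 0, ?_⟩⟩
      have hd : M 1 1 = M 0 0 := by simpa [h₁₀, h₀₁, sub_eq_zero] using h
      ext i j
      fin_cases i <;> fin_cases j <;> simp [h₁₀, h₀₁, hd]
    · exact ⟨0, 1, by simpa using h₀₁⟩
  · exact ⟨1, 0, by simpa using h₁₀⟩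

theorem isConj_companion_of_notMem_range_scalar {M : Matrix (Fin 2) (Fin 2) K}
    (hM : M ∉ Set.range (scalar (Fin 2))) : IsConj !![0, -M.det; 1, M.trace] M := by
  obtain ⟨a, b, hdet⟩ := exists_det_ne_zero_of_notMem_range_scalar hM
  -- the columns `v = (a, b)` and `M v` form a basis, and `M² v = tr M • M v - det M • v`
  refine ⟨(isUnit_iff_isUnit_det _).2 (isUnit_iff_ne_zero.2 hdet) |>.unit, ?_⟩
  simp only [SemiconjBy, IsUnit.unit_spec]
  ext i j
  fin_cases i <;> fin_cases j <;>
    simp [mul_apply, Fin.sum_univ_succ, det_fin_two, trace_fin_two] <;> ring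

theorem isConj_iff_trace_eq_and_det_eq {M N : Matrix (Fin 2) (Fin 2) K}
    (hM : M ∉ Set.range (scalar (Fin 2))) (hN : N ∉ Set.range (scalar (Fin 2))) :
    IsConj M N ↔ M.trace = N.trace ∧ M.det = N.det := by
  refine ⟨trace_eq_and_det_eq_of_isConj, fun ⟨ht, hd⟩ => ?_⟩
  have hM' := isConj_companion_of_notMem_range_scalar hM
  rw [ht, hd] at hM'
  exact (isConj_comm.1 hM').trans (isConj_companion_of_notMem_range_scalar hN)

end Matrix

section Reduction

variable {p : ℕ}

theorem natCast_mul_eq_zero_iff_red_eq_zero [NeZero p] {x : ZMod (p ^ 2)} :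
    (p : ZMod (p ^ 2)) * x = 0 ↔ red p x = 0 := by
  obtain ⟨n, rfl⟩ := ZMod.natCast_zmod_surjective x
  rw [map_natCast, ← Nat.cast_mul, ZMod.natCast_eq_zero_iff, ZMod.natCast_eq_zero_iff, pow_two,
    Nat.mul_dvd_mul_iff_left (NeZero.pos p)]

theorem natCast_smul_eq_iff_map_red_eq [NeZero p] {m n : Type*}
    {A B : Matrix m n (ZMod (p ^ 2))} :
    (p : ZMod (p ^ 2)) • A = (p : ZMod (p ^ 2)) • B ↔ A.map (red p) = B.map (red p) := by
  rw [← sub_eq_zero, ← smul_sub, ← sub_eq_zero (a := A.map _), ← Matrix.map_sub _ (map_sub _)]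
  simp only [← Matrix.ext_iff, Matrix.smul_apply, Matrix.map_apply, Matrix.zero_apply,
    smul_eq_mul, natCast_mul_eq_zero_iff_red_eq_zero]

theorem exists_eq_natCast_smul_of_map_red_eq_zero [NeZero p] {m n : Type*}
    {X : Matrix m n (ZMod (p ^ 2))} (hX : X.map (red p) = 0) :
    ∃ A, X = (p : ZMod (p ^ 2)) • A := by
  have h (i j) : ∃ y, X i j = p * y := by
    obtain ⟨x, hx⟩ := ZMod.natCast_zmod_surjective (X i j)
    have : p ∣ x := by
      rw [← ZMod.natCast_eq_zero_iff, ← map_natCast (red p), hx]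
      exact congrFun₂ hX i j
    obtain ⟨y, rfl⟩ := this
    exact ⟨y, by rw [← hx]; push_cast; rfl⟩
  choose A hA using h
  exact ⟨Matrix.of A, by ext i j; exact hA i j⟩

theorem isUnit_of_isUnit_red [NeZero p] {x : ZMod (p ^ 2)} (h : IsUnit (red p x)) : IsUnit x := by
  obtain ⟨n, rfl⟩ := ZMod.natCast_zmod_surjective x
  rw [map_natCast, ZMod.isUnit_iff_coprime] at h
  exact (ZMod.isUnit_iff_coprime n _).2 (h.pow_right 2)

theorem phi_surjective [NeZero p] : Function.Surjective (phi p) := by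
  intro w
  let s := Function.surjInv (ZMod.ringHom_surjective (red p))
  have hM : ((w : Matrix (Fin 2) (Fin 2) (ZMod p)).map s).map (red p) = w := by
    ext i j
    exact Function.surjInv_eq _ _
  have hdet : IsUnit ((w : Matrix (Fin 2) (Fin 2) (ZMod p)).map s).det := by
    refine isUnit_of_isUnit_red ?_
    rw [RingHom.map_det, RingHom.mapMatrix_apply, hM]
    exact (isUnit_iff_isUnit_det _).1 w.isUnit
  exact ⟨((isUnit_iff_isUnit_det _).2 hdet).unit, Units.ext hM⟩

theorem exists_val_eq_one_add_smul_of_mem_ker [NeZero p] {g : GL2 (p ^ 2)}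
    (hg : g ∈ (phi p).ker) :
    ∃ A, (g : Matrix (Fin 2) (Fin 2) (ZMod (p ^ 2))) = 1 + (p : ZMod (p ^ 2)) • A := by
  have h : ((g : Matrix (Fin 2) (Fin 2) (ZMod (p ^ 2))) - 1).map (red p) = 0 := by
    rw [Matrix.map_sub _ (map_sub _), Matrix.map_one _ (map_zero _) (map_one _), sub_eq_zero]
    exact congrArg Units.val hg
  obtain ⟨A, hA⟩ := exists_eq_natCast_smul_of_map_red_eq_zero h
  exact ⟨A, eq_add_of_sub_eq' hA⟩

/-- For `g = 1 + p • A` this is `A` modulo `p`; its value off `ker φ` is meaningless. -/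
noncomputable def kerMatrix (g : GL2 (p ^ 2)) : Matrix (Fin 2) (Fin 2) (ZMod p) :=
  (Classical.epsilon fun A =>
    (g : Matrix (Fin 2) (Fin 2) (ZMod (p ^ 2))) = 1 + (p : ZMod (p ^ 2)) • A).map (red p)

theorem kerMatrix_eq [NeZero p] {g : GL2 (p ^ 2)} {A : Matrix (Fin 2) (Fin 2) (ZMod (p ^ 2))}
    (hA : (g : Matrix _ _ _) = 1 + (p : ZMod (p ^ 2)) • A) :
    kerMatrix g = A.map (red p) := by
  rw [kerMatrix, ← natCast_smul_eq_iff_map_red_eq, ← add_right_inj 1, ← hA]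
  exact (Classical.epsilon_spec (p := fun B =>
    (g : Matrix (Fin 2) (Fin 2) (ZMod (p ^ 2))) = 1 + (p : ZMod (p ^ 2)) • B) ⟨A, hA⟩).symm

theorem isConj_iff_isConj_map_red [NeZero p] {g h : GL2 (p ^ 2)}
    {A B : Matrix (Fin 2) (Fin 2) (ZMod (p ^ 2))}
    (hA : (g : Matrix _ _ _) = 1 + (p : ZMod (p ^ 2)) • A)
    (hB : (h : Matrix _ _ _) = 1 + (p : ZMod (p ^ 2)) • B) :
    IsConj g h ↔ IsConj (A.map (red p)) (B.map (red p)) := by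
  have semiconj (u : GL2 (p ^ 2)) : u * g = h * u ↔
      (phi p u : Matrix (Fin 2) (Fin 2) (ZMod p)) * A.map (red p) = B.map (red p) * phi p u := by
    rw [Units.ext_iff, Units.val_mul, Units.val_mul, hA, hB, mul_add, add_mul, mul_one, one_mul,
      add_right_inj, mul_smul_comm, smul_mul_assoc, natCast_smul_eq_iff_map_red_eq,
      Matrix.map_mul, Matrix.map_mul]
    rfl
  simp_rw [isConj_iff, mul_inv_eq_iff_eq_mul, semiconj]
  exact ((phi_surjective (p := p)).exists (p := fun w : GL2 p =>
    SemiconjBy (w : Matrix (Fin 2) (Fin 2) (ZMod p)) (A.map (red p)) (B.map (red p)))).symm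

theorem mem_center_of_map_red_mem_range_scalar [NeZero p] {g : GL2 (p ^ 2)}
    {A : Matrix (Fin 2) (Fin 2) (ZMod (p ^ 2))}
    (hA : (g : Matrix _ _ _) = 1 + (p : ZMod (p ^ 2)) • A)
    (hsc : A.map (red p) ∈ Set.range (scalar (Fin 2))) :
    g ∈ Subgroup.center (GL2 (p ^ 2)) := by
  obtain ⟨w, hw⟩ := hsc
  obtain ⟨a, rfl⟩ := ZMod.ringHom_surjective (red p) w
  have hpA : (p : ZMod (p ^ 2)) • A = (p : ZMod (p ^ 2)) • scalar (Fin 2) a := by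
    rw [natCast_smul_eq_iff_map_red_eq, ← hw, scalar_apply, scalar_apply, diagonal_map (map_zero _)]
  rw [GeneralLinearGroup.mem_center_iff_val_mem_range_scalar, hA, hpA]
  exact ⟨1 + p * a, by simp [scalar_apply, ← diagonal_smul, ← diagonal_one, diagonal_add]⟩

end Reduction

section KerInvariant

variable {p : ℕ}

open Classical in
noncomputable def kerInvariant (g : GL2 (p ^ 2)) : GL2 (p ^ 2) ⊕ ZMod p × ZMod p :=
  if g ∈ Subgroup.center (GL2 (p ^ 2)) then .inl g
  else .inr ((kerMatrix g).trace, (kerMatrix g).det)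

theorem kerInvariant_of_mem_center {g : GL2 (p ^ 2)} (hg : g ∈ Subgroup.center (GL2 (p ^ 2))) :
    kerInvariant g = .inl g :=
  if_pos hg

theorem kerInvariant_of_notMem_center {g : GL2 (p ^ 2)}
    (hg : g ∉ Subgroup.center (GL2 (p ^ 2))) :
    kerInvariant g = .inr ((kerMatrix g).trace, (kerMatrix g).det) :=
  if_neg hg

theorem kerInvariant_eq_inl_iff {x g : GL2 (p ^ 2)} :
    kerInvariant x = .inl g ↔ x = g ∧ g ∈ Subgroup.center (GL2 (p ^ 2)) := by
  by_cases hx : x ∈ Subgroup.center (GL2 (p ^ 2))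
  · rw [kerInvariant_of_mem_center hx, Sum.inl.injEq]
    exact ⟨fun e => ⟨e, e ▸ hx⟩, And.left⟩
  · rw [kerInvariant_of_notMem_center hx]
    simp only [reduceCtorEq, false_iff, not_and]
    rintro rfl
    exact hx

theorem isConj_iff_kerInvariant_eq [Fact p.Prime] {g h : GL2 (p ^ 2)} (hg : g ∈ (phi p).ker)
    (hh : h ∈ (phi p).ker) : IsConj g h ↔ kerInvariant g = kerInvariant h := by
  by_cases hgc : g ∈ Subgroup.center (GL2 (p ^ 2))
  · rw [kerInvariant_of_mem_center hgc, eq_comm, kerInvariant_eq_inl_iff]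
    exact ⟨fun H => ⟨(H.eq_of_left_mem_center hgc).symm, hgc⟩, fun ⟨e, _⟩ => e ▸ IsConj.refl h⟩
  by_cases hhc : h ∈ Subgroup.center (GL2 (p ^ 2))
  · rw [kerInvariant_of_mem_center hhc, kerInvariant_eq_inl_iff]
    exact ⟨fun H => ⟨H.eq_of_right_mem_center hhc, hhc⟩, fun ⟨e, _⟩ => e ▸ IsConj.refl g⟩
  obtain ⟨A, hA⟩ := exists_val_eq_one_add_smul_of_mem_ker hg
  obtain ⟨B, hB⟩ := exists_val_eq_one_add_smul_of_mem_ker hh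
  have hAsc : A.map (red p) ∉ Set.range (scalar (Fin 2)) :=
    mt (mem_center_of_map_red_mem_range_scalar hA) hgc
  have hBsc : B.map (red p) ∉ Set.range (scalar (Fin 2)) :=
    mt (mem_center_of_map_red_mem_range_scalar hB) hhc
  rw [isConj_iff_isConj_map_red hA hB, isConj_iff_trace_eq_and_det_eq hAsc hBsc,
    kerInvariant_of_notMem_center hgc, kerInvariant_of_notMem_center hhc, kerMatrix_eq hA,
    kerMatrix_eq hB, Sum.inr.injEq, Prod.mk.injEq]

theorem kerInvariant_eq_inr_iff {x : GL2 (p ^ 2)} {t d : ZMod p} :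
    kerInvariant x = .inr (t, d) ↔
      x ∉ Subgroup.center (GL2 (p ^ 2)) ∧ (kerMatrix x).trace = t ∧ (kerMatrix x).det = d := by
  by_cases hx : x ∈ Subgroup.center (GL2 (p ^ 2))
  · simp [kerInvariant_of_mem_center hx, hx]
  · simp [kerInvariant_of_notMem_center hx, hx]

open Classical in
theorem card_kerInvariant_fiber_inl (H : Subgroup (GL2 (p ^ 2))) (g : GL2 (p ^ 2)) :
    Nat.card {x // x ∈ H ∧ kerInvariant x = .inl g} =
      if g ∈ H ∧ g ∈ Subgroup.center (GL2 (p ^ 2)) then 1 else 0 := by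
  simp_rw [kerInvariant_eq_inl_iff]
  split_ifs with hg
  · exact Nat.card_eq_one_iff_exists.2 ⟨⟨g, hg.1, rfl, hg.2⟩, fun y => Subtype.ext y.2.2.1⟩
  · exact Nat.card_eq_zero.2 (.inl ⟨fun ⟨x, hxH, hxg, hc⟩ => hg ⟨hxg ▸ hxH, hc⟩⟩)

theorem forall_card_kerInvariant_fiber_inl_eq_iff (H₁ H₂ : Subgroup (GL2 (p ^ 2))) :
    (∀ g, Nat.card {x // x ∈ H₁ ∧ kerInvariant x = .inl g} =
        Nat.card {x // x ∈ H₂ ∧ kerInvariant x = .inl g}) ↔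
      ∀ g ∈ Subgroup.center (GL2 (p ^ 2)), (g ∈ H₁ ↔ g ∈ H₂) := by
  refine forall_congr' fun g => ?_
  rw [card_kerInvariant_fiber_inl, card_kerInvariant_fiber_inl]
  by_cases hg : g ∈ Subgroup.center (GL2 (p ^ 2))
  · simp only [hg, and_true]
    split_ifs <;> simp_all
  · simp [hg]

theorem card_trace_det_eq_card_kerInvariant_fiber_add [NeZero p] {H : Subgroup (GL2 (p ^ 2))}
    (hH : H ≤ (phi p).ker) (t d : ZMod p) :
    Nat.card {g : GL2 (p ^ 2) // g ∈ H ∧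
        ∃ A : Matrix (Fin 2) (Fin 2) (ZMod (p ^ 2)),
          (g : Matrix (Fin 2) (Fin 2) (ZMod (p ^ 2))) = 1 + (p : ZMod (p ^ 2)) • A ∧
          (A.map (red p)).trace = t ∧ (A.map (red p)).det = d} =
      Nat.card {g // g ∈ H ∧ kerInvariant g = .inr (t, d)} +
        Nat.card {g // g ∈ H ∧ g ∈ Subgroup.center (GL2 (p ^ 2)) ∧
          (kerMatrix g).trace = t ∧ (kerMatrix g).det = d} := by
  classical
  have hdisj : Disjoint (fun g => g ∈ H ∧ kerInvariant g = .inr (t, d))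
      (fun g => g ∈ H ∧ g ∈ Subgroup.center (GL2 (p ^ 2)) ∧
        (kerMatrix g).trace = t ∧ (kerMatrix g).det = d) := by
    simp only [Pi.disjoint_iff, Prop.disjoint_iff, kerInvariant_eq_inr_iff]
    tauto
  have hker {g} (hg : g ∈ H) : (∃ A : Matrix (Fin 2) (Fin 2) (ZMod (p ^ 2)),
      (g : Matrix (Fin 2) (Fin 2) (ZMod (p ^ 2))) = 1 + (p : ZMod (p ^ 2)) • A ∧
        (A.map (red p)).trace = t ∧ (A.map (red p)).det = d) ↔
      (kerMatrix g).trace = t ∧ (kerMatrix g).det = d := by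
    obtain ⟨A, hA⟩ := exists_val_eq_one_add_smul_of_mem_ker (hH hg)
    exact ⟨fun ⟨B, hB, htd⟩ => kerMatrix_eq hB ▸ htd, fun htd => ⟨A, hA, kerMatrix_eq hA ▸ htd⟩⟩
  rw [← Nat.card_sum, ← Nat.card_congr (subtypeOrEquiv _ _ hdisj)]
  refine Nat.card_congr (Equiv.subtypeEquivRight fun g => ?_)
  rw [and_congr_right hker, kerInvariant_eq_inr_iff]
  tauto

end KerInvariant

theorem locallyConjugate_ker_iff_general {p : ℕ} [Fact p.Prime]
    (H₁ H₂ : Subgroup (GL2 (p^2))) (h₁ : H₁ ≤ (phi p).ker) (h₂ : H₂ ≤ (phi p).ker) :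
    IsLocallyConjugate H₁ H₂ ↔
      ((∀ g : GL2 (p^2),
          (∃ w : ZMod (p^2),
            (↑g : Matrix (Fin 2) (Fin 2) (ZMod (p^2))) = w • 1) → (g ∈ H₁ ↔ g ∈ H₂)) ∧
       ∀ t d : ZMod p,
         Nat.card {g : GL2 (p^2) // g ∈ H₁ ∧
             ∃ A : Matrix (Fin 2) (Fin 2) (ZMod (p^2)),
               (↑g : Matrix (Fin 2) (Fin 2) (ZMod (p^2))) = 1 + (p : ZMod (p^2)) • A ∧
               (A.map (red p)).trace = t ∧ (A.map (red p)).det = d} =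
         Nat.card {g : GL2 (p^2) // g ∈ H₂ ∧
             ∃ A : Matrix (Fin 2) (Fin 2) (ZMod (p^2)),
               (↑g : Matrix (Fin 2) (Fin 2) (ZMod (p^2))) = 1 + (p : ZMod (p^2)) • A ∧
               (A.map (red p)).trace = t ∧ (A.map (red p)).det = d}) := by
  rw [isLocallyConjugate_iff_card_fiber_eq kerInvariant
      fun x hx y hy => isConj_iff_kerInvariant_eq (h₁ hx) (h₂ hy),
    Sum.forall, forall_card_kerInvariant_fiber_inl_eq_iff, Prod.forall]
  simp only [GeneralLinearGroup.mem_center_iff_exists_val_eq_smul_one]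
  refine and_congr_right fun hcenter => forall₂_congr fun t d => ?_
  have hscalar : Nat.card {g // g ∈ H₁ ∧ g ∈ Subgroup.center (GL2 (p ^ 2)) ∧
        (kerMatrix g).trace = t ∧ (kerMatrix g).det = d} =
      Nat.card {g // g ∈ H₂ ∧ g ∈ Subgroup.center (GL2 (p ^ 2)) ∧
        (kerMatrix g).trace = t ∧ (kerMatrix g).det = d} :=
    Nat.card_congr (Equiv.subtypeEquivRight fun g => and_congr_left fun hg =>
      hcenter g (GeneralLinearGroup.mem_center_iff_exists_val_eq_smul_one.1 hg.1))
  rw [card_trace_det_eq_card_kerInvariant_fiber_add h₁,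
    card_trace_det_eq_card_kerInvariant_fiber_add h₂, hscalar, add_left_inj]

/-- Subgroups `H₁, H₂ ≤ ker φ` are locally conjugate in `GL₂(ℤ/p²ℤ)`
iff (i) they contain exactly the same scalar matrices, and (ii) for all `t, d ∈ ℤ/pℤ`
they contain the same number of elements `1 + p•A` with the mod-`p` reduction of `A`
having trace `t` and determinant `d`. -/
theorem locallyConjugate_ker_iff {p : ℕ} [Fact p.Prime] (hp : Odd p)
    (H₁ H₂ : Subgroup (GL2 (p^2))) (h₁ : H₁ ≤ (phi p).ker) (h₂ : H₂ ≤ (phi p).ker) :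
    IsLocallyConjugate H₁ H₂ ↔
      ((∀ g : GL2 (p^2),
          (∃ w : ZMod (p^2),
            (↑g : Matrix (Fin 2) (Fin 2) (ZMod (p^2))) = w • 1) → (g ∈ H₁ ↔ g ∈ H₂)) ∧
       ∀ t d : ZMod p,
         Nat.card {g : GL2 (p^2) // g ∈ H₁ ∧
             ∃ A : Matrix (Fin 2) (Fin 2) (ZMod (p^2)),
               (↑g : Matrix (Fin 2) (Fin 2) (ZMod (p^2))) = 1 + (p : ZMod (p^2)) • A ∧
               (A.map (red p)).trace = t ∧ (A.map (red p)).det = d} =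
         Nat.card {g : GL2 (p^2) // g ∈ H₂ ∧
             ∃ A : Matrix (Fin 2) (Fin 2) (ZMod (p^2)),
               (↑g : Matrix (Fin 2) (Fin 2) (ZMod (p^2))) = 1 + (p : ZMod (p^2)) • A ∧
               (A.map (red p)).trace = t ∧ (A.map (red p)).det = d}) :=
  locallyConjugate_ker_iff_general H₁ H₂ h₁ h₂
end

section
/- Let ε ∈ ℤ/p²ℤ and let R denote the quotient ring (ℤ/p²ℤ)[X]/(X² − ε), with its canonical ℤ/p²ℤ-algebra map ℤ/p²ℤ → R. If g₁ and g₂ are elements of GL₂(ℤ/p²ℤ) whose images in GL₂(R) under the induced map (applying the algebra map to each entry) are conjugate in GL₂(R), then g₁ and g₂ are conjugate in GL₂(ℤ/p²ℤ). -/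
open Matrix

/-!
Let `M ∈ GLₙ(R)`, `R = S[X]/(g)` with `g` monic, conjugate `g₁` to `g₂`. Reducing the entries of
`M` modulo `g` lifts `M` to a matrix `Q` over `S[X]` whose entries have degree `< deg g`; reduction
is `S`-linear, so `Q` still intertwines `g₁` and `g₂`, and hence so does every specialisation
`Q(t)`, `t ∈ S`. It remains to find `t` with `det Q(t)` a unit. The polynomial `det Q` takes a
unit value at the root of `g`, and `R` is faithfully flat over `S`, so its coefficients do not all
lie in the maximal ideal. Over `ℤ/p²ℤ` its reduction modulo `p` is therefore a nonzero polynomial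
of degree at most `2 < p`, which has a non-root in `𝔽_p`; any lift `t` of it will do.
-/

open Polynomial Matrix Cardinal

section

variable {l m o S R T : Type*} [Fintype m] [CommRing S] [CommRing R] [CommRing T]
  [Algebra S R] [Algebra S T]

lemma Matrix.map_linearMap_mul_map_algebraMap (f : R →ₗ[S] T) (M : Matrix l m R)
    (N : Matrix m o S) :
    (M * N.map (algebraMap S R)).map f = M.map f * N.map (algebraMap S T) := by
  ext i j
  simp [mul_apply, map_sum, mul_comm (M _ _), mul_comm (f _), ← Algebra.smul_def]

lemma Matrix.map_linearMap_map_algebraMap_mul (f : R →ₗ[S] T) (N : Matrix l m S)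
    (M : Matrix m o R) :
    (N.map (algebraMap S R) * M).map f = N.map (algebraMap S T) * M.map f := by
  ext i j
  simp [mul_apply, map_sum, ← Algebra.smul_def]

lemma Matrix.map_eval_mul_eq_mul_map_eval [Fintype l] {Q : Matrix l m S[X]} {g₁ : Matrix m m S}
    {g₂ : Matrix l l S} (hQ : Q * g₁.map C = g₂.map C * Q) (t : S) :
    Q.map (eval t) * g₁ = g₂ * Q.map (eval t) := by
  have := congrArg (Matrix.map · (evalRingHom t)) hQ
  simp only [Matrix.map_mul] at this
  simpa [Matrix.map_map, Function.comp_def] using this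

end

lemma Polynomial.natDegree_det_le {n S : Type*} [Fintype n] [DecidableEq n] [CommRing S]
    {Q : Matrix n n S[X]} {m : ℕ} (hQ : ∀ i j, (Q i j).natDegree ≤ m) :
    Q.det.natDegree ≤ Fintype.card n * m := by
  rw [det_apply]
  refine natDegree_sum_le_of_forall_le _ _ fun σ _ => ?_
  calc natDegree (Equiv.Perm.sign σ • ∏ i, Q (σ i) i)
      ≤ natDegree (∏ i, Q (σ i) i) := natDegree_smul_le _ _
    _ ≤ ∑ i, natDegree (Q (σ i) i) := natDegree_prod_le _ _
    _ ≤ Fintype.card n * m :=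
      (Finset.sum_le_card_nsmul _ _ m fun i _ => hQ _ _).trans_eq (by simp)

lemma Polynomial.map_ne_zero_of_isUnit_aeval {S K R : Type*} [CommRing S] [CommRing K]
    [Nontrivial K] [CommRing R] [Algebra S R] [Module.FaithfullyFlat S R] (φ : S →+* K)
    {P : S[X]} {x : R} (h : IsUnit (aeval x P)) : P.map φ ≠ 0 := by
  intro hP
  have hPker : P ∈ (RingHom.ker φ).map C := by rw [← ker_mapRingHom]; exact hP
  have haeval : aeval x P ∈ (RingHom.ker φ).map (algebraMap S R) := by
    have hcomp : (aeval x).toRingHom.comp C = algebraMap S R := by ext; simp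
    have := Ideal.mem_map_of_mem (aeval x).toRingHom hPker
    rwa [Ideal.map_map, hcomp] at this
  apply RingHom.ker_ne_top φ
  rw [← Ideal.comap_map_eq_self_of_faithfullyFlat (B := R) (RingHom.ker φ),
    Ideal.eq_top_of_isUnit_mem _ haeval h, Ideal.comap_top]

lemma Polynomial.exists_isUnit_eval_of_map_ne_zero {S K : Type*} [CommRing S] [Field K]
    (φ : S →+* K) [IsLocalHom φ] (hφ : Function.Surjective φ) {P : S[X]} (hP : P.map φ ≠ 0)
    (hcard : (P.natDegree : Cardinal) < #K) : ∃ t, IsUnit (P.eval t) := by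
  obtain ⟨s, hs⟩ := (P.map φ).exists_eval_ne_zero_of_natDegree_lt_card hP
    (lt_of_le_of_lt (by exact_mod_cast natDegree_map_le) hcard)
  obtain ⟨t, rfl⟩ := hφ s
  rw [eval_map_apply] at hs
  exact ⟨t, isUnit_of_map_unit φ _ hs.isUnit⟩

namespace AdjoinRoot

variable {S : Type*} [CommRing S] {g : S[X]}

lemma nontrivial_of_monic [Nontrivial S] (hg : g.Monic) (hg1 : g ≠ 1) :
    Nontrivial (AdjoinRoot g) :=
  Ideal.Quotient.nontrivial_iff.mpr (by simpa [Ideal.span_singleton_eq_top, hg.isUnit_iff])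

lemma natDegree_modByMonicHom_lt (hg : g.Monic) (hg1 : g ≠ 1) (x : AdjoinRoot g) :
    (modByMonicHom hg x).natDegree < g.natDegree := by
  obtain ⟨f, rfl⟩ := mk_surjective x
  rw [modByMonicHom_mk]
  exact natDegree_modByMonic_lt _ hg hg1

lemma map_mk_map_modByMonicHom {l m : Type*} (hg : g.Monic) (M : Matrix l m (AdjoinRoot g)) :
    (M.map (modByMonicHom hg)).map (mk g) = M := by
  ext i j
  exact mk_leftInverse hg _

lemma modByMonicHom_mul_eq_mul {l m : Type*} [Fintype l] [Fintype m] (hg : g.Monic)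
    {M : Matrix l m (AdjoinRoot g)} {g₁ : Matrix m m S} {g₂ : Matrix l l S}
    (hM : M * g₁.map (algebraMap S (AdjoinRoot g)) = g₂.map (algebraMap S (AdjoinRoot g)) * M) :
    M.map (modByMonicHom hg) * g₁.map C = g₂.map C * M.map (modByMonicHom hg) := by
  have := congrArg (Matrix.map · (modByMonicHom hg)) hM
  simpa only [Matrix.map_linearMap_mul_map_algebraMap, Matrix.map_linearMap_map_algebraMap_mul,
    Polynomial.algebraMap_eq] using this

end AdjoinRoot

namespace Matrix.GeneralLinearGroup

variable {n : Type*} [Fintype n] [DecidableEq n]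

lemma isConj_of_mul_eq_mul {S : Type*} [CommRing S] {g₁ g₂ : GL n S} (C : Matrix n n S)
    (hC : IsUnit C.det) (h : C * g₁ = g₂ * C) : IsConj g₁ g₂ :=
  ⟨toUnits (nonsingInvUnit C hC), Units.ext h⟩

theorem isConj_of_isConj_map_adjoinRoot {S K : Type*} [CommRing S] [Field K] (φ : S →+* K)
    [IsLocalHom φ] (hφ : Function.Surjective φ) {g : S[X]} (hg : g.Monic) (hg1 : g ≠ 1)
    (hcard : ((Fintype.card n * (g.natDegree - 1) : ℕ) : Cardinal) < #K) {g₁ g₂ : GL n S}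
    (h : IsConj (map (algebraMap S (AdjoinRoot g)) g₁) (map (algebraMap S (AdjoinRoot g)) g₂)) :
    IsConj g₁ g₂ := by
  have := φ.domain_nontrivial
  have := AdjoinRoot.nontrivial_of_monic hg hg1
  have := hg.free_adjoinRoot
  obtain ⟨c, hc⟩ := h
  set Q := ((c : GL n (AdjoinRoot g)) : Matrix n n (AdjoinRoot g)).map
    (AdjoinRoot.modByMonicHom hg)
  have hQ : Q * g₁.val.map C = g₂.val.map C * Q := by
    refine AdjoinRoot.modByMonicHom_mul_eq_mul hg ?_
    simpa using congrArg (Units.val : GL n (AdjoinRoot g) → _) hc.eq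
  have hdet : IsUnit (aeval (AdjoinRoot.root g) Q.det) := by
    rw [AdjoinRoot.aeval_eq, RingHom.map_det, RingHom.mapMatrix_apply,
      AdjoinRoot.map_mk_map_modByMonicHom]
    exact isUnits_det_units (c : GL n (AdjoinRoot g))
  have hdeg : Q.det.natDegree ≤ Fintype.card n * (g.natDegree - 1) :=
    natDegree_det_le fun _ _ =>
      Nat.le_sub_one_of_lt (AdjoinRoot.natDegree_modByMonicHom_lt hg hg1 _)
  obtain ⟨t, ht⟩ := exists_isUnit_eval_of_map_ne_zero φ hφ
    (map_ne_zero_of_isUnit_aeval φ hdet) (lt_of_le_of_lt (by exact_mod_cast hdeg) hcard)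
  refine isConj_of_mul_eq_mul (Q.map (eval t)) ?_ (map_eval_mul_eq_mul_map_eval hQ t)
  rwa [← coe_evalRingHom, ← RingHom.mapMatrix_apply, ← RingHom.map_det]

end Matrix.GeneralLinearGroup

instance isLocalHom_red {p : ℕ} [Fact p.Prime] : IsLocalHom (red p) where
  map_nonunit u hu := by
    have hp : p.Prime := Fact.out
    rw [← ZMod.natCast_zmod_val u, map_natCast, ZMod.isUnit_iff_coprime, Nat.coprime_comm,
      hp.coprime_iff_not_dvd] at hu
    rwa [← ZMod.natCast_zmod_val u, ZMod.isUnit_natCast_iff_not_dvd_pow hp two_pos]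

/-- Let `R = (ℤ/p²ℤ)[X]/(X² - ε)`. If two elements of `GL₂(ℤ/p²ℤ)`
become conjugate in `GL₂(R)` (via the entrywise algebra map), then they are already
conjugate in `GL₂(ℤ/p²ℤ)`. -/
theorem isConj_of_isConj_quadExt {p : ℕ} [Fact p.Prime] (hp : Odd p) (ε : ZMod (p^2))
    (g₁ g₂ : GL2 (p^2))
    (h : IsConj
      (Matrix.GeneralLinearGroup.map
        (algebraMap (ZMod (p^2))
          (Polynomial (ZMod (p^2)) ⧸
            Ideal.span {Polynomial.X ^ 2 - Polynomial.C ε})) g₁)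
      (Matrix.GeneralLinearGroup.map
        (algebraMap (ZMod (p^2))
          (Polynomial (ZMod (p^2)) ⧸
            Ideal.span {Polynomial.X ^ 2 - Polynomial.C ε})) g₂)) :
    IsConj g₁ g₂ := by
  have : Nontrivial (ZMod (p ^ 2)) := (red p).domain_nontrivial
  have hdeg : (X ^ 2 - C ε).natDegree = 2 := natDegree_X_pow_sub_C
  have hp2 : 2 < p := (Fact.out : p.Prime).two_le.lt_of_ne (by rintro rfl; norm_num at hp)
  refine GeneralLinearGroup.isConj_of_isConj_map_adjoinRoot (red p) (ZMod.ringHom_surjective _)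
    (monic_X_pow_sub_C ε two_ne_zero) (fun h1 => by simp [h1] at hdeg) ?_ h
  rw [hdeg, Cardinal.mk_fintype, ZMod.card]
  exact_mod_cast hp2
end

section
/- Let H be a subgroup of GL₂(ℤ/p²ℤ) such that φ(H) contains the matrix !![1,1;0,1]. Suppose κ = 1 + p·!![a,b;c,d] is an element of H, where a, b, c, d ∈ ℤ/p²ℤ. Then: (1) if a ≢ d (mod p), then 1 + p·!![0,1;0,0] ∈ H; and (2) if c ≢ 0 (mod p), then both 1 + p·!![0,1;0,0] ∈ H and 1 + p·!![1,0;0,-1] ∈ H. -/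
open Matrix

/-! Since `(p A)(p B) = 0` in `M₂(ℤ/p²ℤ)`, the map `A ↦ 1 + p A` is a homomorphism from
`(M₂(ℤ/p²ℤ), +)` to `GL₂(ℤ/p²ℤ)` that only depends on `A mod p`. Hence `{A mod p | 1 + p A ∈ H}`
is an `𝔽_p`-subspace `V` of `M₂(𝔽_p)`, stable under conjugation by `φ(H)`. For `u = !![1,1;0,1]`,
the map `X ↦ u X u⁻¹ - X` sends `!![a,b;c,d]` to `!![c, d-a-c; 0, -c]` and that to
`!![0, -2c; 0, 0]`; scalar multiples and differences of these lie in `V` and give the claimed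
matrices when `a ≠ d` or `c ≠ 0`, as `2` is invertible for odd `p`. -/

local notation "M₂" R => Matrix (Fin 2) (Fin 2) R

section KerUnit

variable {p : ℕ}

lemma natCast_smul_mul_natCast_smul (X Y : M₂ (ZMod (p ^ 2))) :
    ((p : ZMod (p ^ 2)) • X) * ((p : ZMod (p ^ 2)) • Y) = 0 := by
  rw [smul_mul_assoc, mul_smul_comm, smul_smul, ← Nat.cast_mul, ← pow_two,
    ZMod.natCast_self, zero_smul]

lemma kerUnit_add (X Y : M₂ (ZMod (p ^ 2))) : kerUnit (X + Y) = kerUnit X * kerUnit Y := by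
  ext : 1
  change 1 + (p : ZMod (p ^ 2)) • (X + Y) =
    (1 + (p : ZMod (p ^ 2)) • X) * (1 + (p : ZMod (p ^ 2)) • Y)
  rw [add_mul, one_mul, mul_add, mul_one, natCast_smul_mul_natCast_smul, add_zero, smul_add]
  abel

lemma kerUnit_zero : kerUnit (0 : M₂ (ZMod (p ^ 2))) = 1 := by
  ext : 1
  change 1 + (p : ZMod (p ^ 2)) • (0 : M₂ (ZMod (p ^ 2))) = 1
  rw [smul_zero, add_zero]

lemma kerUnit_neg (X : M₂ (ZMod (p ^ 2))) : kerUnit (-X) = (kerUnit X)⁻¹ := by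
  rw [eq_inv_iff_mul_eq_one, ← kerUnit_add, neg_add_cancel, kerUnit_zero]

lemma kerUnit_conj (g : GL2 (p ^ 2)) (X : M₂ (ZMod (p ^ 2))) :
    g * kerUnit X * g⁻¹ = kerUnit (g.val * X * g⁻¹.val) := by
  ext : 1
  change g.val * (1 + (p : ZMod (p ^ 2)) • X) * g⁻¹.val =
    1 + (p : ZMod (p ^ 2)) • (g.val * X * g⁻¹.val)
  rw [mul_add, mul_one, add_mul, mul_smul_comm, smul_mul_assoc, ← Units.val_mul,
    mul_inv_cancel, Units.val_one]

variable [NeZero p]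

lemma natCast_mul_eq_zero_of_red_eq_zero {x : ZMod (p ^ 2)} (hx : red p x = 0) :
    (p : ZMod (p ^ 2)) * x = 0 := by
  have hdvd : p ∣ x.val := by
    rwa [red, ZMod.castHom_apply, ZMod.cast_eq_val, ZMod.natCast_eq_zero_iff] at hx
  obtain ⟨k, hk⟩ := hdvd
  rw [← ZMod.natCast_zmod_val x, hk, Nat.cast_mul, ← mul_assoc, ← Nat.cast_mul, ← pow_two,
    ZMod.natCast_self, zero_mul]

lemma kerUnit_eq_of_map_red_eq {X Y : M₂ (ZMod (p ^ 2))} (h : X.map (red p) = Y.map (red p)) :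
    kerUnit X = kerUnit Y := by
  rw [← sub_add_cancel X Y, kerUnit_add, mul_eq_right, ← kerUnit_zero]
  ext : 1
  change 1 + (p : ZMod (p ^ 2)) • (X - Y) = 1 + (p : ZMod (p ^ 2)) • (0 : M₂ (ZMod (p ^ 2)))
  rw [smul_zero, add_zero, add_eq_left]
  ext i j
  rw [Matrix.smul_apply, smul_eq_mul, Matrix.zero_apply]
  refine natCast_mul_eq_zero_of_red_eq_zero ?_
  simpa [sub_eq_zero] using congrFun (congrFun h i) j

end KerUnit

section KerLie

variable {p : ℕ} (H : Subgroup (GL2 (p ^ 2)))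

def kerAddSubgroup : AddSubgroup (M₂ (ZMod (p ^ 2))) where
  carrier := {A | kerUnit A ∈ H}
  add_mem' {A B} hA hB := show kerUnit (A + B) ∈ H from kerUnit_add A B ▸ H.mul_mem hA hB
  zero_mem' := show kerUnit 0 ∈ H from kerUnit_zero (p := p) ▸ H.one_mem
  neg_mem' {A} hA := show kerUnit (-A) ∈ H from kerUnit_neg A ▸ H.inv_mem hA

/-- The 𝔽_p-subspace `{A mod p | 1 + p A ∈ H}` of `M₂(𝔽_p)`: the Lie algebra of `H ∩ ker φ`. -/
def kerLie : Submodule (ZMod p) (M₂ (ZMod p)) :=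
  AddSubgroup.toZModSubmodule p ((kerAddSubgroup H).map (red p).mapMatrix.toAddMonoidHom)

variable {H} [NeZero p]

lemma kerUnit_mem_iff {A : M₂ (ZMod (p ^ 2))} : kerUnit A ∈ H ↔ A.map (red p) ∈ kerLie H := by
  refine ⟨fun hA => ⟨A, hA, rfl⟩, ?_⟩
  rintro ⟨B, hB, hBA⟩
  rwa [← kerUnit_eq_of_map_red_eq hBA]

lemma conj_mem_kerLie {g : GL2 (p ^ 2)} (hg : g ∈ H) {M : M₂ (ZMod p)} (hM : M ∈ kerLie H) :
    (phi p g : M₂ (ZMod p)) * M * ((phi p g)⁻¹ : GL2 p) ∈ kerLie H := by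
  obtain ⟨A, hA, rfl⟩ := hM
  have hconj : kerUnit (g.val * A * g⁻¹.val) ∈ H :=
    kerUnit_conj g A ▸ H.mul_mem (H.mul_mem hg hA) (H.inv_mem hg)
  have h := kerUnit_mem_iff.1 hconj
  rw [Matrix.map_mul, Matrix.map_mul] at h
  rwa [← map_inv]

end KerLie

lemma unipotent_conj_sub {R : Type*} [CommRing R] (a b c d : R) :
    !![1, 1; 0, 1] * !![a, b; c, d] * !![1, -1; 0, 1] - !![a, b; c, d] =
      !![c, d - a - c; 0, -c] := by
  ext i j
  fin_cases i <;> fin_cases j <;> simp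
  ring

lemma Matrix.map_fin_two {R S : Type*} (f : R → S) (a b c d : R) :
    !![a, b; c, d].map f = !![f a, f b; f c, f d] := by
  rw [Matrix.eta_fin_two (Matrix.map _ _)]
  simp

section UnipotentStable

variable {F : Type*} [Field F] {V : Submodule F (M₂ F)}
  (hV : ∀ M ∈ V, !![1, 1; 0, 1] * M * !![1, -1; 0, 1] - M ∈ V)
include hV

lemma unipotent_conj_sub_mem {a b c d : F} (hX : !![a, b; c, d] ∈ V) :
    !![c, d - a - c; 0, -c] ∈ V :=
  unipotent_conj_sub a b c d ▸ hV _ hX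

lemma upper_mem_of_unipotent_stable (h2 : (2 : F) ≠ 0) {a b c d : F} (hc : c ≠ 0)
    (hX : !![a, b; c, d] ∈ V) : !![0, 1; 0, 0] ∈ V := by
  have hZ := unipotent_conj_sub_mem hV (unipotent_conj_sub_mem hV hX)
  have hZ' : (-2 * c) • !![(0 : F), 1; 0, 0] ∈ V := by
    convert hZ using 1
    ext i j
    fin_cases i <;> fin_cases j <;> simp
    ring
  exact (V.smul_mem_iff (by simp [h2, hc])).1 hZ'

lemma diag_mem_of_unipotent_stable (h2 : (2 : F) ≠ 0) {a b c d : F} (hc : c ≠ 0)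
    (hX : !![a, b; c, d] ∈ V) : !![1, 0; 0, -1] ∈ V := by
  have hE := upper_mem_of_unipotent_stable hV h2 hc hX
  have hD : c • !![(1 : F), 0; 0, -1] ∈ V := by
    convert V.sub_mem (unipotent_conj_sub_mem hV hX) (V.smul_mem (d - a - c) hE) using 1
    ext i j
    fin_cases i <;> fin_cases j <;> simp
  exact (V.smul_mem_iff hc).1 hD

lemma upper_mem_of_unipotent_stable_of_ne (h2 : (2 : F) ≠ 0) {a b c d : F} (had : a ≠ d)
    (hX : !![a, b; c, d] ∈ V) : !![0, 1; 0, 0] ∈ V := by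
  obtain rfl | hc := eq_or_ne c 0
  · have hE : (d - a) • !![(0 : F), 1; 0, 0] ∈ V := by
      convert unipotent_conj_sub_mem hV hX using 1
      ext i j
      fin_cases i <;> fin_cases j <;> simp
    exact (V.smul_mem_iff (sub_ne_zero.2 had.symm)).1 hE
  · exact upper_mem_of_unipotent_stable hV h2 hc hX

end UnipotentStable

/-- Let `H ≤ GL₂(ℤ/p²ℤ)` with `!![1,1;0,1] ∈ φ(H)` and suppose
`κ = 1 + p•!![a,b;c,d] ∈ H`. If `a ≢ d (mod p)` then `1 + p•!![0,1;0,0] ∈ H`; and if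
`c ≢ 0 (mod p)` then both `1 + p•!![0,1;0,0] ∈ H` and `1 + p•!![1,0;0,-1] ∈ H`. -/
theorem mem_of_unipotent_in_image {p : ℕ} [Fact p.Prime] (hp : Odd p)
    (H : Subgroup (GL2 (p^2)))
    (hT : ∃ τ ∈ H, (↑(phi p τ) : Matrix (Fin 2) (Fin 2) (ZMod p)) = !![1, 1; 0, 1])
    (a b c d : ZMod (p^2)) (hκ : kerUnit !![a, b; c, d] ∈ H) :
    (red p a ≠ red p d → kerUnit !![0, 1; 0, 0] ∈ H) ∧
    (red p c ≠ 0 →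
      kerUnit !![0, 1; 0, 0] ∈ H ∧ kerUnit !![1, 0; 0, -1] ∈ H) := by
  obtain ⟨τ, hτH, hτ⟩ := hT
  have hτinv : (((phi p τ)⁻¹ : GL2 p) : M₂ (ZMod p)) = !![1, -1; 0, 1] := by
    rw [Matrix.coe_units_inv, hτ]
    exact Matrix.inv_eq_right_inv (by simp [Matrix.one_fin_two])
  have hV : ∀ M ∈ kerLie H, !![1, 1; 0, 1] * M * !![1, -1; 0, 1] - M ∈ kerLie H := fun M hM =>
    (kerLie H).sub_mem (hτ ▸ hτinv ▸ conj_mem_kerLie hτH hM) hM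
  have h2 : (2 : ZMod p) ≠ 0 :=
    Ring.two_ne_zero (by rw [ZMod.ringChar_zmod_n]; rintro rfl; exact absurd hp (by decide))
  have hX : !![red p a, red p b; red p c, red p d] ∈ kerLie H := by
    simpa only [map_fin_two] using kerUnit_mem_iff.1 hκ
  simp only [kerUnit_mem_iff, map_fin_two, map_zero, map_one, map_neg]
  exact ⟨fun had => upper_mem_of_unipotent_stable_of_ne hV h2 had hX,
    fun hc => ⟨upper_mem_of_unipotent_stable hV h2 hc hX,
      diag_mem_of_unipotent_stable hV h2 hc hX⟩⟩
end

section
/- Let p be a prime with p > 3 and let H be a subgroup of GL₂(ℤ/p²ℤ) such that φ(H) is exactly the set of elements of GL₂(ℤ/pℤ) of determinant 1. Then either H is exactly the set of elements of GL₂(ℤ/p²ℤ) of determinant 1, or H is exactly the set of elements g ∈ GL₂(ℤ/p²ℤ) with det(φ(g)) = 1 (i.e. H = φ⁻¹(SL₂(ℤ/pℤ))). -/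
open Matrix

/-!
The kernel of `φ` consists of the matrices `1 + p • A`, and `det (1 + p • A) = 1 + p * tr A`.
If `x ∈ H` lifts a unipotent `1 + N̄` with `N̄² = 0`, the binomial theorem gives
`x ^ p = 1 + p • N` (this needs `p > 3`), so `H` contains every `1 + p • A` with `tr Ā = 0`:
trace-zero `2 × 2` matrices are sums of square-zero ones. If `H` also contains some `1 + p • A`
with `tr Ā ≠ 0`, it contains all of `ker φ` and is the full preimage of `SL₂(𝔽_p)`. Otherwise
`det` is trivial on `H ∩ ker φ`, so on `H` it factors through `φ(H) = SL₂(𝔽_p)`, which is perfect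
for `p > 3`; hence `H ≤ SL₂(ℤ/p²)`, and equality holds because `H` contains
`SL₂(ℤ/p²) ∩ ker φ` and maps onto `SL₂(𝔽_p)`.
-/

namespace Subgroup

variable {G Q : Type*} [Group G] [Group Q] {f : G →* Q} {H K : Subgroup G}

theorem le_ker_of_map_commutator_eq {A : Type*} [CommGroup A] {χ : G →* A}
    (hperfect : ⁅H.map f, H.map f⁆ = H.map f) (hker : H ⊓ f.ker ≤ χ.ker) : H ≤ χ.ker := by
  intro h hh
  obtain ⟨c, hc, hfc⟩ : f h ∈ (⁅H, H⁆).map f := by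
    rw [map_commutator, hperfect]
    exact mem_map_of_mem f hh
  have hχc : χ c = 1 :=
    Abelianization.commutator_subset_ker χ (commutator_mono le_top le_top hc)
  have hχ : χ (c⁻¹ * h) = 1 :=
    hker (mem_inf.2 ⟨mul_mem (inv_mem (H.commutator_le_self hc)) hh, by simp [hfc]⟩)
  simpa [hχc] using hχ

theorem le_of_map_le_of_inf_ker_le (hmap : K.map f ≤ H.map f) (hHK : H ≤ K)
    (hker : K ⊓ f.ker ≤ H) : K ≤ H := by
  intro g hg
  obtain ⟨h, hh, hfh⟩ := hmap (mem_map_of_mem f hg)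
  have : g * h⁻¹ ∈ K ⊓ f.ker := mem_inf.2 ⟨mul_mem hg (inv_mem (hHK hh)), by simp [hfh]⟩
  simpa using mul_mem (hker this) hh

end Subgroup

namespace Matrix

theorem GeneralLinearGroup.mem_ker_det_iff {n R : Type*} [Fintype n] [DecidableEq n]
    [CommRing R] {g : GL n R} : g ∈ det.ker ↔ (g : Matrix n n R).det = 1 := by
  rw [MonoidHom.mem_ker, Units.ext_iff, val_det_apply, Units.val_one]

theorem SpecialLinearGroup.mem_range_toGL_iff {n R : Type*} [Fintype n] [DecidableEq n]
    [CommRing R] {g : GL n R} :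
    g ∈ (toGL : SpecialLinearGroup n R →* GL n R).range ↔ (g : Matrix n n R).det = 1 :=
  ⟨by rintro ⟨A, rfl⟩; exact A.2, fun h => ⟨⟨g, h⟩, Units.ext rfl⟩⟩

theorem SpecialLinearGroup.commutator_range_toGL {F : Type*} [Field F] {a : F} (ha : a ≠ 0)
    (hasq : a ^ 2 ≠ 1) :
    ⁅(toGL (n := Fin 2) (R := F)).range, (toGL (n := Fin 2) (R := F)).range⁆ =
      (toGL (n := Fin 2) (R := F)).range := by
  rw [MonoidHom.range_eq_map, ← Subgroup.map_commutator, ← _root_.commutator_def,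
    SL2.commutator_eq_top ha hasq]

end Matrix

theorem ZMod.natCast_ne_zero_of_lt {n p : ℕ} (h0 : 0 < n) (hn : n < p) : (n : ZMod p) ≠ 0 :=
  fun h => absurd (Nat.le_of_dvd h0 ((ZMod.natCast_eq_zero_iff n p).1 h)) (by omega)

theorem add_pow_prime_of_sq_eq_natCast_mul {R : Type*} [Ring R] {p : ℕ} (hp : p.Prime)
    (hp3 : 3 < p) (hpp : (p : R) ^ 2 = 0) {M E : R} (hM : M ^ 2 = p * E) :
    (1 + M) ^ p = 1 + p * M := by
  have hvanish : ∀ m ≤ p, 2 ≤ m → M ^ m * (p.choose m : R) = 0 := by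
    intro m hmp hm2
    rcases hmp.lt_or_eq with hlt | heq
    · obtain ⟨c, hc⟩ := hp.dvd_choose_self (by omega) hlt
      calc M ^ m * (p.choose m : R) = (c * p : ℕ) * (p * (E * M ^ (m - 2))) := by
            rw [← Nat.cast_comm, hc, mul_comm p c, ← mul_assoc (p : R), ← hM, ← pow_add,
              Nat.add_sub_cancel' hm2]
        _ = 0 := by
            rw [Nat.cast_mul, mul_assoc, ← mul_assoc (p : R), ← sq, hpp, zero_mul, mul_zero]
    · have hM4 : M ^ 4 = 0 := by
        rw [show 4 = 2 * 2 from rfl, pow_mul, hM, (Nat.cast_commute p E).mul_pow, hpp, zero_mul]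
      rw [← Nat.add_sub_cancel' (show 4 ≤ m by omega), pow_add, hM4, zero_mul, zero_mul]
  obtain ⟨n, rfl⟩ : ∃ n, p = n + 2 := ⟨p - 2, by omega⟩
  rw [add_comm 1 M, (Commute.one_right M).add_pow, Finset.sum_range_succ',
    Finset.sum_range_succ', Finset.sum_eq_zero fun i hi => ?_]
  · simp only [zero_add, pow_one, one_pow, mul_one, Nat.choose_one_right, pow_zero,
      Nat.choose_zero_right, Nat.cast_one]
    rw [← Nat.cast_comm]
    abel
  · simpa using hvanish (i + 2) (by have := Finset.mem_range.1 hi; omega) (by omega)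

section KerUnit

variable {p : ℕ}

theorem coe_phi (g : GL2 (p ^ 2)) :
    (phi p g : Matrix (Fin 2) (Fin 2) (ZMod p)) = (red p).mapMatrix g := rfl

theorem coe_kerUnit (A : Matrix (Fin 2) (Fin 2) (ZMod (p ^ 2))) :
    (kerUnit A : Matrix (Fin 2) (Fin 2) (ZMod (p ^ 2))) = 1 + (p : ZMod (p ^ 2)) • A := rfl

theorem kerUnit_add_s14 (A B : Matrix (Fin 2) (Fin 2) (ZMod (p ^ 2))) :
    kerUnit (A + B) = kerUnit A * kerUnit B := by
  have hAB : ((p : ZMod (p ^ 2)) • A) * ((p : ZMod (p ^ 2)) • B) = 0 := by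
    rw [smul_mul_smul_comm, ← sq, ← Nat.cast_pow, ZMod.natCast_self, zero_smul]
  ext : 1
  simp only [Units.val_mul, coe_kerUnit, add_mul, mul_add, one_mul, mul_one, hAB, smul_add]
  abel

theorem kerUnit_nsmul (n : ℕ) (A : Matrix (Fin 2) (Fin 2) (ZMod (p ^ 2))) :
    kerUnit (n • A) = kerUnit A ^ n := by
  induction n with
  | zero => ext : 1; simp [coe_kerUnit]
  | succ n ih => rw [succ_nsmul, kerUnit_add_s14, ih]; exact (pow_succ _ n).symm

theorem det_kerUnit (A : Matrix (Fin 2) (Fin 2) (ZMod (p ^ 2))) :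
    (kerUnit A : Matrix (Fin 2) (Fin 2) (ZMod (p ^ 2))).det = 1 + p * A.trace := by
  have hpp : (p : ZMod (p ^ 2)) * p = 0 := by rw [← sq, ← Nat.cast_pow, ZMod.natCast_self]
  rw [coe_kerUnit, det_fin_two, trace_fin_two]
  simp only [Matrix.add_apply, Matrix.smul_apply, one_apply_eq, one_apply_ne zero_ne_one,
    one_apply_ne one_ne_zero, smul_eq_mul, zero_add]
  linear_combination (A 0 0 * A 1 1 - A 0 1 * A 1 0) * hpp

end KerUnit

section Reduction

variable {p : ℕ} [Fact p.Prime]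

theorem red_eq_zero_iff {x : ZMod (p ^ 2)} : red p x = 0 ↔ ∃ y, x = p * y := by
  refine ⟨fun h => ?_, by rintro ⟨y, rfl⟩; rw [map_mul, map_natCast, ZMod.natCast_self, zero_mul]⟩
  obtain ⟨a, rfl⟩ := ZMod.intCast_surjective x
  rw [map_intCast, ZMod.intCast_zmod_eq_zero_iff_dvd] at h
  obtain ⟨b, rfl⟩ := h
  exact ⟨b, by push_cast; rfl⟩

theorem natCast_mul_eq_zero_iff {x : ZMod (p ^ 2)} :
    (p : ZMod (p ^ 2)) * x = 0 ↔ red p x = 0 := by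
  obtain ⟨a, rfl⟩ := ZMod.intCast_surjective x
  rw [map_intCast, ZMod.intCast_zmod_eq_zero_iff_dvd, ← Int.cast_natCast, ← Int.cast_mul,
    ZMod.intCast_zmod_eq_zero_iff_dvd, Nat.cast_pow, sq]
  exact mul_dvd_mul_iff_left (by exact_mod_cast (Fact.out : p.Prime).ne_zero)

theorem natCast_smul_eq_zero_iff {A : Matrix (Fin 2) (Fin 2) (ZMod (p ^ 2))} :
    (p : ZMod (p ^ 2)) • A = 0 ↔ (red p).mapMatrix A = 0 := by
  simp only [← Matrix.ext_iff, Matrix.smul_apply, smul_eq_mul, RingHom.mapMatrix_apply, map_apply,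
    Matrix.zero_apply, natCast_mul_eq_zero_iff]

theorem exists_eq_natCast_smul_of_mapMatrix_red_eq_zero
    {A : Matrix (Fin 2) (Fin 2) (ZMod (p ^ 2))} (hA : (red p).mapMatrix A = 0) :
    ∃ E, A = (p : ZMod (p ^ 2)) • E := by
  choose E hE using fun i j => red_eq_zero_iff.1 (congrFun₂ hA i j)
  exact ⟨Matrix.of E, Matrix.ext hE⟩

theorem kerUnit_eq_kerUnit {A B : Matrix (Fin 2) (Fin 2) (ZMod (p ^ 2))}
    (h : (red p).mapMatrix A = (red p).mapMatrix B) : kerUnit A = kerUnit B := by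
  ext : 1
  rw [coe_kerUnit, coe_kerUnit, ← sub_eq_zero, add_sub_add_left_eq_sub, ← smul_sub,
    natCast_smul_eq_zero_iff, map_sub, h, sub_self]

theorem exists_kerUnit_eq_of_mem_ker {g : GL2 (p ^ 2)} (hg : g ∈ (phi p).ker) :
    ∃ A, kerUnit A = g := by
  obtain ⟨E, hE⟩ := exists_eq_natCast_smul_of_mapMatrix_red_eq_zero
    (A := (g : Matrix (Fin 2) (Fin 2) (ZMod (p ^ 2))) - 1)
    (by rw [map_sub, ← coe_phi, hg, Units.val_one, map_one, sub_self])
  exact ⟨E, Units.ext (by rw [coe_kerUnit, ← hE, add_sub_cancel])⟩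

theorem det_kerUnit_eq_one_iff {A : Matrix (Fin 2) (Fin 2) (ZMod (p ^ 2))} :
    (kerUnit A : Matrix (Fin 2) (Fin 2) (ZMod (p ^ 2))).det = 1 ↔ red p A.trace = 0 := by
  rw [det_kerUnit, add_eq_left, natCast_mul_eq_zero_iff]

end Reduction

section Lifting

open SpecialLinearGroup GeneralLinearGroup

variable {p : ℕ} [Fact p.Prime] {H : Subgroup (GL2 (p ^ 2))}

theorem kerUnit_mem_of_sq_eq_zero (hp3 : 3 < p)
    (hsurj : (toGL (n := Fin 2) (R := ZMod p)).range ≤ H.map (phi p))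
    {N : Matrix (Fin 2) (Fin 2) (ZMod (p ^ 2))} (hN : (red p).mapMatrix N ^ 2 = 0)
    (hdet : (1 + (red p).mapMatrix N).det = 1) : kerUnit N ∈ H := by
  obtain ⟨x, hxH, hx⟩ := hsurj ⟨⟨1 + (red p).mapMatrix N, hdet⟩, rfl⟩
  set M := (x : Matrix (Fin 2) (Fin 2) (ZMod (p ^ 2))) - 1
  have hMN : (red p).mapMatrix M = (red p).mapMatrix N := by
    rw [map_sub, ← coe_phi, hx, map_one]
    exact add_sub_cancel_left _ _
  obtain ⟨E, hE⟩ := exists_eq_natCast_smul_of_mapMatrix_red_eq_zero (A := M ^ 2)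
    (by rw [map_pow, hMN, hN])
  have hxp : x ^ p = kerUnit M := by
    have hpp : (p : Matrix (Fin 2) (Fin 2) (ZMod (p ^ 2))) ^ 2 = 0 := by
      rw [← Nat.cast_pow, CharP.cast_eq_zero]
    rw [Nat.cast_smul_eq_nsmul, nsmul_eq_mul] at hE
    ext : 1
    rw [Units.val_pow_eq_pow_val, coe_kerUnit, Nat.cast_smul_eq_nsmul, nsmul_eq_mul,
      ← add_pow_prime_of_sq_eq_natCast_mul Fact.out hp3 hpp hE, add_sub_cancel]
  rw [kerUnit_eq_kerUnit hMN.symm, ← hxp]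
  exact pow_mem hxH p

theorem kerUnit_mem_of_red_trace_eq_zero (hp3 : 3 < p)
    (hsurj : (toGL (n := Fin 2) (R := ZMod p)).range ≤ H.map (phi p))
    {A : Matrix (Fin 2) (Fin 2) (ZMod (p ^ 2))} (hA : red p A.trace = 0) : kerUnit A ∈ H := by
  set a := A 0 0
  have hdecomp : kerUnit A =
      kerUnit (!![0, A 0 1 - a; 0, 0] + !![0, 0; A 1 0 + a, 0] + !![a, a; -a, -a]) := by
    rw [trace_fin_two, map_add] at hA
    apply kerUnit_eq_kerUnit
    ext i j
    fin_cases i <;> fin_cases j <;> simp [a]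
    linear_combination hA
  rw [hdecomp, kerUnit_add_s14, kerUnit_add_s14]
  refine mul_mem (mul_mem ?_ ?_) ?_ <;> apply kerUnit_mem_of_sq_eq_zero hp3 hsurj <;>
    simp [sq, det_fin_two, ← Matrix.ext_iff, Fin.forall_fin_two, Matrix.mul_apply]
  ring

theorem ker_phi_le_of_kerUnit_mem (hp3 : 3 < p)
    (hsurj : (toGL (n := Fin 2) (R := ZMod p)).range ≤ H.map (phi p))
    {A₀ : Matrix (Fin 2) (Fin 2) (ZMod (p ^ 2))} (hA₀ : kerUnit A₀ ∈ H)
    (ht : red p A₀.trace ≠ 0) : (phi p).ker ≤ H := by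
  intro g hg
  obtain ⟨B, rfl⟩ := exists_kerUnit_eq_of_mem_ker hg
  set m := (red p B.trace / red p A₀.trace).val
  have hm : red p (B - m • A₀).trace = 0 := by
    rw [trace_sub, trace_smul, map_sub, map_nsmul, nsmul_eq_mul, ZMod.natCast_zmod_val,
      div_mul_cancel₀ _ ht, sub_self]
  rw [← sub_add_cancel B (m • A₀), kerUnit_add_s14, kerUnit_nsmul]
  exact mul_mem (kerUnit_mem_of_red_trace_eq_zero hp3 hsurj hm) (pow_mem hA₀ m)

theorem eq_ker_det_of_red_trace_eq_zero (hp3 : 3 < p)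
    (hsurj : H.map (phi p) = (toGL (n := Fin 2) (R := ZMod p)).range)
    (htrace : ∀ A, kerUnit A ∈ H → red p A.trace = 0) :
    H = (det : GL2 (p ^ 2) →* (ZMod (p ^ 2))ˣ).ker := by
  have htwo : (2 : ZMod p) ≠ 0 := by exact_mod_cast ZMod.natCast_ne_zero_of_lt two_pos (by omega)
  have htwo_sq : (2 : ZMod p) ^ 2 ≠ 1 := by
    intro h
    apply ZMod.natCast_ne_zero_of_lt (n := 3) (p := p) three_pos hp3
    rw [show ((3 : ℕ) : ZMod p) = 2 ^ 2 - 1 by push_cast; ring, h, sub_self]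
  have hle : H ≤ det.ker := by
    refine Subgroup.le_ker_of_map_commutator_eq (f := phi p) ?_ ?_
    · rw [hsurj]
      exact commutator_range_toGL htwo htwo_sq
    · rintro g ⟨hgH, hg⟩
      obtain ⟨A, rfl⟩ := exists_kerUnit_eq_of_mem_ker hg
      exact mem_ker_det_iff.2 (det_kerUnit_eq_one_iff.2 (htrace A hgH))
  refine le_antisymm hle (Subgroup.le_of_map_le_of_inf_ker_le (f := phi p) ?_ hle ?_)
  · rintro _ ⟨g, hg, rfl⟩
    rw [hsurj, mem_range_toGL_iff, coe_phi, ← RingHom.map_det, mem_ker_det_iff.1 hg, map_one]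
  · rintro g ⟨hdet, hg⟩
    obtain ⟨A, rfl⟩ := exists_kerUnit_eq_of_mem_ker hg
    exact kerUnit_mem_of_red_trace_eq_zero hp3 hsurj.ge
      (det_kerUnit_eq_one_iff.1 (mem_ker_det_iff.1 hdet))

end Lifting

open SpecialLinearGroup GeneralLinearGroup in
/-- Let `p > 3` be prime and `H ≤ GL₂(ℤ/p²ℤ)` with `φ(H)` exactly the
set of determinant-`1` elements of `GL₂(ℤ/pℤ)`. Then `H = SL₂(ℤ/p²ℤ)` or
`H = φ⁻¹(SL₂(ℤ/pℤ))`. -/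
theorem eq_SL_or_preimage_SL {p : ℕ} [Fact p.Prime] (hp3 : 3 < p)
    (H : Subgroup (GL2 (p^2)))
    (hSL : ∀ M : GL2 p,
      M ∈ H.map (phi p) ↔ (↑M : Matrix (Fin 2) (Fin 2) (ZMod p)).det = 1) :
    (∀ g : GL2 (p^2), g ∈ H ↔ (↑g : Matrix (Fin 2) (Fin 2) (ZMod (p^2))).det = 1) ∨
    (∀ g : GL2 (p^2), g ∈ H ↔
      (↑(phi p g) : Matrix (Fin 2) (Fin 2) (ZMod p)).det = 1) := by
  have hsurj : H.map (phi p) = (toGL (n := Fin 2) (R := ZMod p)).range := by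
    ext M
    rw [hSL, mem_range_toGL_iff]
  by_cases htrace : ∀ A, kerUnit A ∈ H → red p A.trace = 0
  · left
    intro g
    rw [eq_ker_det_of_red_trace_eq_zero hp3 hsurj htrace, mem_ker_det_iff]
  · right
    push Not at htrace
    obtain ⟨A₀, hA₀, ht⟩ := htrace
    intro g
    rw [← hSL, ← Subgroup.mem_comap,
      Subgroup.comap_map_eq_self (ker_phi_le_of_kerUnit_mem hp3 hsurj.ge hA₀ ht)]
end
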